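/- Let J be a nonempty finite index set, let c_j ∈ ℂ ∖ {0} for j ∈ J, and let (p_j)_{j∈J} be pairwise distinct polynomials in ℝ[t] with p_j(0) = 0. Define f : ℝ → ℂ by f(t) = Σ_{j∈J} c_j·e^{i p_j(t)}. Then there exists ε > 0 such that, setting V_ε := {t ∈ [1,+∞) : |f(t)| ≥ ε}, the Lebesgue integral ∫_{V_ε} (1/t) dt is infinite. -/

import Mathlib

open Filter MeasureTheory

open Polynomial Asymptotics intervalIntegral

lemma osc_bound (q : ℝ[X]) (hq : 0 < q.degree) :
    ∃ C : ℝ, ∀ T : ℝ, 1 ≤ T → ‖∫ t in (1:ℝ)..T, Complex.exp (Complex.I * q.eval t) / t‖ ≤ C := by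
  set d := q.derivative with hddef
  have hd : d ≠ 0 := by
    intro h
    have := Polynomial.eq_C_of_derivative_eq_zero (hddef ▸ h)
    rw [this] at hq
    exact absurd hq (not_lt.mpr degree_C_le)
  set n := d.derivative * X + d with hndef
  -- degree comparisons
  have hdeg1 : n.degree ≤ (d^2).degree := by
    have h1 : d.derivative.degree < d.degree := degree_derivative_lt hd
    have h0 : (0:WithBot ℕ) ≤ d.degree := zero_le_degree_iff.mpr hd
    have h2 : (d.derivative * X).degree ≤ d.degree := by
      rw [degree_mul, degree_X]
      exact Nat.WithBot.add_one_le_of_lt h1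
    calc n.degree ≤ max (d.derivative * X).degree d.degree := degree_add_le _ _
      _ ≤ d.degree := max_le h2 le_rfl
      _ ≤ (d^2).degree := by
        rw [degree_pow, two_smul]
        exact le_add_of_nonneg_left h0
  have hdeg2 : (1 : ℝ[X]).degree ≤ (d * X).degree := by
    rw [degree_one, degree_mul, degree_X]
    have h0 : (0:WithBot ℕ) ≤ d.degree := zero_le_degree_iff.mpr hd
    calc (0:WithBot ℕ) ≤ d.degree := h0
      _ ≤ d.degree + 1 := le_add_of_nonneg_right (by norm_num)
  obtain ⟨K1, hK1pos, hK1⟩ := (isBigO_of_degree_le n (d^2) hdeg1).exists_pos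
  obtain ⟨K2, hK2pos, hK2⟩ := (isBigO_of_degree_le 1 (d * X) hdeg2).exists_pos
  rw [IsBigOWith, eventually_atTop] at hK1 hK2
  obtain ⟨a1, ha1⟩ := hK1
  obtain ⟨a2, ha2⟩ := hK2
  obtain ⟨a3, ha3⟩ := eventually_atTop.mp (Polynomial.eventually_no_roots d hd)
  set t0 : ℝ := max 1 (max a1 (max a2 a3)) with ht0def
  have ht01 : (1:ℝ) ≤ t0 := le_max_left _ _
  have ht0pos : (0:ℝ) < t0 := lt_of_lt_of_le one_pos ht01
  have hdne : ∀ t : ℝ, t0 ≤ t → d.eval t ≠ 0 := fun t ht => ha3 t (le_trans (le_max_of_le_right (le_max_of_le_right (le_max_right _ _))) ht)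
  have htne : ∀ t : ℝ, t0 ≤ t → t ≠ 0 := fun t ht => ne_of_gt (lt_of_lt_of_le ht0pos ht)
  -- the real weight and its derivative
  set w : ℝ → ℝ := fun t => (d.eval t * t)⁻¹ with hwdef
  set w' : ℝ → ℝ := fun t => -(n.eval t) / (d.eval t * t)^2 with hw'def
  have hwderiv : ∀ t : ℝ, t0 ≤ t → HasDerivAt w (w' t) t := by
    intro t ht
    have hg : HasDerivAt (fun t : ℝ => d.eval t * t) (d.derivative.eval t * t + d.eval t * 1) t :=
      (d.hasDerivAt t).mul (hasDerivAt_id t)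
    have hne : d.eval t * t ≠ 0 := mul_ne_zero (hdne t ht) (htne t ht)
    have := hg.inv hne
    refine HasDerivAt.congr_deriv this ?_
    simp only [w', n, eval_add, eval_mul, eval_X, mul_one]
  -- bounds
  have hwbound : ∀ t : ℝ, t0 ≤ t → |w t| ≤ K2 := by
    intro t ht
    have h2 := ha2 t (le_trans (le_max_of_le_right (le_max_of_le_right (le_max_left _ _))) ht)
    simp only [eval_one, eval_mul, eval_X, norm_one, Real.norm_eq_abs] at h2
    have hne : d.eval t * t ≠ 0 := mul_ne_zero (hdne t ht) (htne t ht)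
    have hpos : 0 < |d.eval t * t| := abs_pos.mpr hne
    rw [hwdef]
    simp only [abs_inv]
    rw [inv_le_comm₀ hpos hK2pos]
    have h3 : K2⁻¹ * 1 ≤ K2⁻¹ * (K2 * |d.eval t * t|) :=
      mul_le_mul_of_nonneg_left h2 (inv_pos.mpr hK2pos).le
    rwa [mul_one, ← mul_assoc, inv_mul_cancel₀ hK2pos.ne', one_mul] at h3
  have hw'bound : ∀ t : ℝ, t0 ≤ t → |w' t| ≤ K1 / t^2 := by
    intro t ht
    have h1 := ha1 t (le_trans (le_max_of_le_right (le_max_left _ _)) ht)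
    simp only [Real.norm_eq_abs] at h1
    have habs2 : |(d^2).eval t| = (d.eval t)^2 := by
      rw [eval_pow, abs_pow, sq_abs]
    rw [habs2] at h1
    have htpos : (0:ℝ) < t := lt_of_lt_of_le ht0pos ht
    have hne' : d.eval t * t ≠ 0 := mul_ne_zero (hdne t ht) (htne t ht)
    have hden : (0:ℝ) < (d.eval t * t)^2 := by
      have := sq_abs (d.eval t * t)
      nlinarith [abs_pos.mpr hne']
    rw [hw'def]
    rw [abs_div, abs_neg, abs_of_pos hden, div_le_div_iff₀ hden (pow_pos htpos 2)]
    calc |n.eval t| * t^2 ≤ (K1 * (d.eval t)^2) * t^2 :=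
          mul_le_mul_of_nonneg_right h1 (by positivity)
      _ = K1 * (d.eval t * t)^2 := by ring
  -- complex functions
  set v : ℝ → ℂ := fun t => Complex.exp (Complex.I * q.eval t) with hvdef
  have hvnorm : ∀ t : ℝ, ‖v t‖ = 1 := by
    intro t
    rw [hvdef]
    simp [Complex.norm_exp]
  have hvcont : Continuous v :=
    Complex.continuous_exp.comp (continuous_const.mul (Complex.continuous_ofReal.comp q.continuous))
  set u : ℝ → ℂ := fun t => (w t : ℂ) * Complex.I⁻¹ with hudef
  set u' : ℝ → ℂ := fun t => (w' t : ℂ) * Complex.I⁻¹ with hu'def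
  have huderiv : ∀ t : ℝ, t0 ≤ t → HasDerivAt u (u' t) t := fun t ht =>
    ((hwderiv t ht).ofReal_comp).mul_const _
  set v' : ℝ → ℂ := fun t => v t * (Complex.I * d.eval t) with hv'def
  have hvderiv : ∀ t : ℝ, HasDerivAt v (v' t) t := by
    intro t
    have h1 : HasDerivAt (fun t : ℝ => ((q.eval t : ℝ) : ℂ)) ((d.eval t : ℝ) : ℂ) t :=
      (q.hasDerivAt t).ofReal_comp
    exact (h1.const_mul Complex.I).cexp
  have hu'norm : ∀ t : ℝ, ‖u' t‖ = |w' t| := by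
    intro t
    rw [hu'def]
    simp
  have hunorm : ∀ t : ℝ, ‖u t‖ = |w t| := by
    intro t
    rw [hudef]
    simp
  have huv : ∀ t : ℝ, t0 ≤ t → u t * v' t = v t / t := by
    intro t ht
    rw [hudef, hv'def, hwdef]
    push_cast
    have h1 : ((d.eval t : ℝ) : ℂ) ≠ 0 := Complex.ofReal_ne_zero.mpr (hdne t ht)
    have h2 : ((t : ℝ) : ℂ) ≠ 0 := Complex.ofReal_ne_zero.mpr (htne t ht)
    field_simp
  -- key bound on [t0, T]
  have key : ∀ T : ℝ, t0 ≤ T → ‖∫ t in t0..T, v t / t‖ ≤ 2 * K2 + K1 := by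
    intro T hT
    have huIcc : Set.uIcc t0 T = Set.Icc t0 T := Set.uIcc_of_le hT
    have hmem : ∀ x ∈ Set.uIcc t0 T, t0 ≤ x := by
      intro x hx
      rw [huIcc] at hx
      exact hx.1
    have hw'cont : ContinuousOn w' (Set.uIcc t0 T) := by
      rw [hw'def]
      apply ContinuousOn.div
      · exact (n.continuous.neg).continuousOn
      · exact (((d.continuous.mul continuous_id).pow 2)).continuousOn
      · intro x hx
        have hne' : d.eval x * x ≠ 0 := mul_ne_zero (hdne x (hmem x hx)) (htne x (hmem x hx))
        positivity
    have hu'cont : ContinuousOn u' (Set.uIcc t0 T) := by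
      rw [hu'def]
      exact ((Complex.continuous_ofReal.comp_continuousOn hw'cont).mul continuousOn_const)
    have hu'int : IntervalIntegrable u' volume t0 T := hu'cont.intervalIntegrable
    have hv'int : IntervalIntegrable v' volume t0 T := by
      apply Continuous.intervalIntegrable
      exact hvcont.mul (continuous_const.mul (Complex.continuous_ofReal.comp d.continuous))
    have ibp := intervalIntegral.integral_mul_deriv_eq_deriv_mul
      (fun x hx => huderiv x (hmem x hx)) (fun x hx => hvderiv x) hu'int hv'int
    have hcongr : ∫ t in t0..T, u t * v' t = ∫ t in t0..T, v t / t := by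
      apply intervalIntegral.integral_congr
      intro x hx
      exact huv x (hmem x hx)
    rw [hcongr] at ibp
    rw [ibp]
    have hb1 : ‖u T * v T‖ ≤ K2 := by
      rw [norm_mul, hvnorm, mul_one, hunorm]
      exact hwbound T hT
    have hb2 : ‖u t0 * v t0‖ ≤ K2 := by
      rw [norm_mul, hvnorm, mul_one, hunorm]
      exact hwbound t0 le_rfl
    have hb3 : ‖∫ t in t0..T, u' t * v t‖ ≤ K1 := by
      have hstep : ‖∫ t in t0..T, u' t * v t‖ ≤ ∫ t in t0..T, ‖u' t * v t‖ :=
        intervalIntegral.norm_integral_le_integral_norm hT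
      have hmono : ∫ t in t0..T, ‖u' t * v t‖ ≤ ∫ t in t0..T, K1 * (t^2)⁻¹ := by
        apply intervalIntegral.integral_mono_on hT
        · apply ContinuousOn.intervalIntegrable
          exact ((hu'cont.mul hvcont.continuousOn).norm)
        · apply ContinuousOn.intervalIntegrable
          apply ContinuousOn.mul continuousOn_const
          apply ContinuousOn.inv₀ ((continuous_pow 2).continuousOn)
          intro x hx
          rw [huIcc] at hx
          have := lt_of_lt_of_le ht0pos hx.1
          positivity
        · intro x hx
          rw [norm_mul, hvnorm, mul_one, hu'norm]
          have h := hw'bound x hx.1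
          rw [div_eq_mul_inv] at h
          exact h
      have hcomp : ∫ t in t0..T, K1 * (t^2)⁻¹ = K1 * (t0⁻¹ - T⁻¹) := by
        rw [intervalIntegral.integral_const_mul]
        have : ∫ t in t0..T, (t^2)⁻¹ = -T⁻¹ - -t0⁻¹ := by
          apply intervalIntegral.integral_eq_sub_of_hasDerivAt
          · intro x hx
            rw [Set.uIcc_of_le hT] at hx
            have hxne : x ≠ 0 := ne_of_gt (lt_of_lt_of_le ht0pos hx.1)
            simpa using (hasDerivAt_inv hxne).fun_neg
          · apply ContinuousOn.intervalIntegrable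
            apply ContinuousOn.inv₀ ((continuous_pow 2).continuousOn)
            intro x hx
            rw [Set.uIcc_of_le hT] at hx
            have := lt_of_lt_of_le ht0pos hx.1
            positivity
        rw [this]
        ring
      have hlast : K1 * (t0⁻¹ - T⁻¹) ≤ K1 := by
        have h1 : t0⁻¹ - T⁻¹ ≤ 1 := by
          have h2 : t0⁻¹ ≤ 1 := inv_le_one_of_one_le₀ ht01
          have h3 : (0:ℝ) ≤ T⁻¹ := inv_nonneg.mpr (le_trans ht0pos.le hT)
          linarith
        nlinarith
      calc ‖∫ t in t0..T, u' t * v t‖ ≤ ∫ t in t0..T, ‖u' t * v t‖ := hstep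
        _ ≤ K1 * (t0⁻¹ - T⁻¹) := hcomp ▸ hmono
        _ ≤ K1 := hlast
    calc ‖u T * v T - u t0 * v t0 - ∫ t in t0..T, u' t * v t‖
        ≤ ‖u T * v T - u t0 * v t0‖ + ‖∫ t in t0..T, u' t * v t‖ := norm_sub_le _ _
      _ ≤ (‖u T * v T‖ + ‖u t0 * v t0‖) + K1 := add_le_add (norm_sub_le _ _) hb3
      _ ≤ (K2 + K2) + K1 := by linarith
      _ = 2 * K2 + K1 := by ring
  -- assemble: for all T ≥ 1
  refine ⟨(t0 - 1) + (2 * K2 + K1), fun T hT => ?_⟩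
  have hII : ∀ a b : ℝ, 1 ≤ a → 1 ≤ b → IntervalIntegrable (fun t : ℝ => v t / t) volume a b := by
    intro a b ha hb
    apply ContinuousOn.intervalIntegrable
    apply ContinuousOn.div hvcont.continuousOn Complex.continuous_ofReal.continuousOn
    intro x hx
    have hx1 : min a b ≤ x := hx.1
    have : (1:ℝ) ≤ x := le_trans (le_min ha hb) hx1
    exact Complex.ofReal_ne_zero.mpr (by linarith)
  have hsmall : ∀ a b : ℝ, 1 ≤ a → a ≤ b → ‖∫ t in a..b, v t / t‖ ≤ b - a := by
    intro a b ha hab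
    have := intervalIntegral.norm_integral_le_of_norm_le_const (C := 1)
      (f := fun t : ℝ => v t / t) (a := a) (b := b) ?_
    · calc ‖∫ t in a..b, v t / t‖ ≤ 1 * |b - a| := this
        _ = b - a := by rw [one_mul, abs_of_nonneg (by linarith)]
    · intro x hx
      rw [Set.uIoc_of_le hab] at hx
      have hx1 : (1:ℝ) ≤ x := le_trans ha hx.1.le
      rw [norm_div, hvnorm]
      have : ‖(x:ℂ)‖ = |x| := by simp
      rw [this, abs_of_pos (by linarith)]
      exact (div_le_one (by linarith)).mpr hx1
  rcases le_total T t0 with hTt0 | hTt0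
  · have h := hsmall 1 T le_rfl hT
    have : (0:ℝ) ≤ 2 * K2 + K1 := by positivity
    linarith
  · have hsplit : (∫ t in (1:ℝ)..T, v t / t) =
        (∫ t in (1:ℝ)..t0, v t / t) + ∫ t in t0..T, v t / t :=
      (intervalIntegral.integral_add_adjacent_intervals (hII 1 t0 le_rfl ht01)
        (hII t0 T ht01 (le_trans ht01 hTt0))).symm
    rw [hsplit]
    calc ‖(∫ t in (1:ℝ)..t0, v t / t) + ∫ t in t0..T, v t / t‖
        ≤ ‖∫ t in (1:ℝ)..t0, v t / t‖ + ‖∫ t in t0..T, v t / t‖ := norm_add_le _ _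
      _ ≤ (t0 - 1) + (2 * K2 + K1) := add_le_add (hsmall 1 t0 le_rfl ht01) (key T hTt0)

lemma deg_pos_of_ne {q : ℝ[X]} (hq : q ≠ 0) (h0 : q.eval 0 = 0) : 0 < q.degree := by
  by_contra h
  push_neg at h
  have := Polynomial.eq_C_of_degree_le_zero h
  rw [this] at h0 hq
  rw [eval_C] at h0
  rw [h0] at hq
  simp at hq

set_option maxHeartbeats 2000000 in
theorem stmt6 {J : Type} [Fintype J] [Nonempty J] (c : J → ℂ) (hc : ∀ j, c j ≠ 0)
    (p : J → Polynomial ℝ) (hdist : Function.Injective p)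
    (h0 : ∀ j, (p j).eval 0 = 0)
    (f : ℝ → ℂ)
    (hf : ∀ t : ℝ, f t = ∑ j, c j * Complex.exp (Complex.I * ((p j).eval t : ℝ))) :
    ∃ ε > (0 : ℝ),
      (∫⁻ t in {t : ℝ | 1 ≤ t ∧ ε ≤ ‖f t‖}, ENNReal.ofReal (1 / t)) = ⊤ := by
  classical
  set S : ℝ := ∑ j, ‖c j‖^2 with hSdef
  have hS : 0 < S := Finset.sum_pos (fun j _ => pow_pos (norm_pos_iff.mpr (hc j)) 2) Finset.univ_nonempty
  set M : ℝ := ∑ j, ‖c j‖ with hMdef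
  have hM0 : 0 ≤ M := Finset.sum_nonneg (fun j _ => norm_nonneg _)
  have hfM : ∀ t : ℝ, ‖f t‖ ≤ M := by
    intro t
    rw [hf t]
    calc ‖∑ j, c j * Complex.exp (Complex.I * ((p j).eval t : ℝ))‖
        ≤ ∑ j, ‖c j * Complex.exp (Complex.I * ((p j).eval t : ℝ))‖ := norm_sum_le _ _
      _ = ∑ j, ‖c j‖ := by
          apply Finset.sum_congr rfl
          intro j _
          rw [norm_mul]
          have : ‖Complex.exp (Complex.I * ((p j).eval t : ℝ))‖ = 1 := by
            simp [Complex.norm_exp]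
          rw [this, mul_one]
  set ε : ℝ := Real.sqrt (S / 2) with hεdef
  have hεpos : 0 < ε := Real.sqrt_pos.mpr (by linarith)
  have hε2 : ε ^ 2 = S / 2 := Real.sq_sqrt (by linarith)
  refine ⟨ε, hεpos, ?_⟩
  set V : Set ℝ := {t : ℝ | 1 ≤ t ∧ ε ≤ ‖f t‖} with hVdef
  have hfc : Continuous f := by
    have : f = fun t => ∑ j, c j * Complex.exp (Complex.I * ((p j).eval t : ℝ)) := funext hf
    rw [this]
    apply continuous_finset_sum
    intro j _
    exact continuous_const.mul (Complex.continuous_exp.comp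
      (continuous_const.mul (Complex.continuous_ofReal.comp (p j).continuous)))
  have hVmeas : MeasurableSet V := by
    have : V = {t : ℝ | 1 ≤ t} ∩ {t : ℝ | ε ≤ ‖f t‖} := rfl
    rw [this]
    exact (measurableSet_le measurable_const measurable_id).inter
      (measurableSet_le measurable_const (continuous_norm.comp hfc).measurable)
  -- oscillatory constants
  have hB : ∀ jk : J × J, ∃ C : ℝ, 0 ≤ C ∧ (jk.1 ≠ jk.2 → ∀ T : ℝ, 1 ≤ T →
      ‖∫ t in (1:ℝ)..T, Complex.exp (Complex.I * ((p jk.1 - p jk.2).eval t : ℝ)) / t‖ ≤ C) := by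
    intro jk
    by_cases h : jk.1 = jk.2
    · exact ⟨0, le_rfl, fun h' => absurd h h'⟩
    · have hq : p jk.1 - p jk.2 ≠ 0 := sub_ne_zero.mpr (fun he => h (hdist he))
      have h00 : (p jk.1 - p jk.2).eval 0 = 0 := by rw [eval_sub, h0, h0, sub_zero]
      obtain ⟨C, hC⟩ := osc_bound _ (deg_pos_of_ne hq h00)
      exact ⟨max C 0, le_max_right _ _, fun _ T hT => le_trans (hC T hT) (le_max_left _ _)⟩
  choose B hB0 hBs using hB
  set Ctot : ℝ := ∑ jk : J × J, ‖c jk.1‖ * ‖c jk.2‖ * B jk with hCtotdef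
  have hCtot0 : 0 ≤ Ctot := Finset.sum_nonneg (fun jk _ => by
    have := hB0 jk; positivity)
  -- pointwise product identity
  have hpt : ∀ (j k : J) (t : ℝ),
      (c j * Complex.exp (Complex.I * ((p j).eval t : ℝ))) *
        (starRingEnd ℂ) (c k * Complex.exp (Complex.I * ((p k).eval t : ℝ))) =
      (c j * (starRingEnd ℂ) (c k)) * Complex.exp (Complex.I * (((p j - p k).eval t : ℝ) : ℂ)) := by
    intro j k t
    rw [eval_sub]
    push_cast
    rw [map_mul, ← Complex.exp_conj, map_mul, Complex.conj_I, Complex.conj_ofReal,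
      mul_mul_mul_comm, ← Complex.exp_add]
    ring_nf
  set Ijk : J × J → ℝ → ℂ := fun jk T =>
    ∫ t in (1:ℝ)..T, Complex.exp (Complex.I * (((p jk.1 - p jk.2).eval t : ℝ) : ℂ)) / t
    with hIjkdef
  have hIjkint : ∀ (q : ℝ[X]) (T : ℝ), 1 ≤ T →
      IntervalIntegrable (fun t : ℝ => Complex.exp (Complex.I * ((q.eval t : ℝ) : ℂ)) / t)
        volume 1 T := by
    intro q T hT
    apply ContinuousOn.intervalIntegrable
    apply ContinuousOn.div
    · exact (Complex.continuous_exp.comp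
        (continuous_const.mul (Complex.continuous_ofReal.comp q.continuous))).continuousOn
    · exact Complex.continuous_ofReal.continuousOn
    · intro x hx
      rw [Set.uIcc_of_le hT] at hx
      exact Complex.ofReal_ne_zero.mpr (by linarith [hx.1])
  have hIdiag : ∀ (j : J) (T : ℝ), 1 ≤ T → Ijk (j, j) T = ((Real.log T : ℝ) : ℂ) := by
    intro j T hT
    have h1 : ∀ t : ℝ, t ∈ Set.uIcc (1:ℝ) T →
        Complex.exp (Complex.I * (((p j - p j).eval t : ℝ) : ℂ)) / t = ((1/t : ℝ) : ℂ) := by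
      intro t _
      simp [sub_self]
    rw [hIjkdef]
    simp only
    rw [intervalIntegral.integral_congr h1, intervalIntegral.integral_ofReal]
    norm_cast
    rw [integral_one_div]
    · rw [div_one]
    · rw [Set.uIcc_of_le hT]
      intro h
      linarith [h.1]
  have hGeq : ∀ T : ℝ, 1 ≤ T →
      ((∫ t in (1:ℝ)..T, ‖f t‖^2 / t : ℝ) : ℂ) =
        ∑ jk : J × J, (c jk.1 * (starRingEnd ℂ) (c jk.2)) * Ijk jk T := by
    intro T hT
    have h1 : ∀ t : ℝ, ((‖f t‖^2 / t : ℝ) : ℂ) =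
        ∑ jk : J × J, (c jk.1 * (starRingEnd ℂ) (c jk.2)) *
          (Complex.exp (Complex.I * (((p jk.1 - p jk.2).eval t : ℝ) : ℂ)) / t) := by
      intro t
      have h3 : ((‖f t‖^2 / t : ℝ) : ℂ) = (f t * (starRingEnd ℂ) (f t)) / t := by
        rw [Complex.mul_conj, Complex.normSq_eq_norm_sq]
        push_cast
        ring
      rw [h3, hf t, map_sum, Finset.sum_mul_sum, Finset.sum_div]
      rw [Fintype.sum_prod_type]
      apply Finset.sum_congr rfl
      intro j _
      rw [Finset.sum_div]
      apply Finset.sum_congr rfl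
      intro k _
      rw [hpt j k t, mul_div_assoc]
    calc ((∫ t in (1:ℝ)..T, ‖f t‖^2 / t : ℝ) : ℂ)
        = ∫ t in (1:ℝ)..T, ((‖f t‖^2 / t : ℝ) : ℂ) := (intervalIntegral.integral_ofReal).symm
      _ = ∫ t in (1:ℝ)..T, ∑ jk : J × J, (c jk.1 * (starRingEnd ℂ) (c jk.2)) *
            (Complex.exp (Complex.I * (((p jk.1 - p jk.2).eval t : ℝ) : ℂ)) / t) := by
          apply intervalIntegral.integral_congr
          intro t _
          exact h1 t
      _ = ∑ jk : J × J, ∫ t in (1:ℝ)..T, (c jk.1 * (starRingEnd ℂ) (c jk.2)) *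
            (Complex.exp (Complex.I * (((p jk.1 - p jk.2).eval t : ℝ) : ℂ)) / t) := by
          apply intervalIntegral.integral_finset_sum
          intro jk _
          exact (hIjkint _ T hT).const_mul _
      _ = ∑ jk : J × J, (c jk.1 * (starRingEnd ℂ) (c jk.2)) * Ijk jk T := by
          apply Finset.sum_congr rfl
          intro jk _
          rw [intervalIntegral.integral_const_mul]
  -- lower bound for the weighted L² integral
  have hlower : ∀ T : ℝ, 1 ≤ T →
      S * Real.log T - Ctot ≤ ∫ t in (1:ℝ)..T, ‖f t‖^2 / t := by
    intro T hT
    have hG := hGeq T hT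
    set A : J × J → ℂ := fun jk => (c jk.1 * (starRingEnd ℂ) (c jk.2)) * Ijk jk T with hAdef
    have hdiagval : ∀ j : J, A (j, j) = ((‖c j‖^2 * Real.log T : ℝ) : ℂ) := by
      intro j
      rw [hAdef]
      simp only
      rw [hIdiag j T hT, Complex.mul_conj, Complex.normSq_eq_norm_sq]
      push_cast
      ring
    have hsum : ∑ jk : J × J, A jk =
        ((S * Real.log T : ℝ) : ℂ) + ∑ jk ∈ Finset.univ.filter (fun jk : J × J => jk.1 ≠ jk.2), A jk := by
      rw [← Finset.sum_filter_add_sum_filter_not Finset.univ (fun jk : J × J => jk.1 = jk.2)]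
      congr 1
      have himg : Finset.univ.filter (fun jk : J × J => jk.1 = jk.2)
          = Finset.univ.image (fun j : J => (j, j)) := by
        ext jk
        simp only [Finset.mem_filter, Finset.mem_univ, true_and, Finset.mem_image]
        constructor
        · intro h
          exact ⟨jk.1, Prod.ext rfl h⟩
        · rintro ⟨j, rfl⟩
          rfl
      rw [himg, Finset.sum_image (by intro a _ b _ h; exact (Prod.mk.injEq _ _ _ _).mp h |>.1)]
      rw [hSdef]
      push_cast
      rw [Finset.sum_mul]
      apply Finset.sum_congr rfl
      intro j _
      rw [hdiagval j]
      push_cast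
      ring
    have hErr : ‖∑ jk ∈ Finset.univ.filter (fun jk : J × J => jk.1 ≠ jk.2), A jk‖ ≤ Ctot := by
      calc ‖∑ jk ∈ Finset.univ.filter (fun jk : J × J => jk.1 ≠ jk.2), A jk‖
          ≤ ∑ jk ∈ Finset.univ.filter (fun jk : J × J => jk.1 ≠ jk.2), ‖A jk‖ := norm_sum_le _ _
        _ ≤ ∑ jk ∈ Finset.univ.filter (fun jk : J × J => jk.1 ≠ jk.2),
              ‖c jk.1‖ * ‖c jk.2‖ * B jk := by
            apply Finset.sum_le_sum
            intro jk hjk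
            rw [Finset.mem_filter] at hjk
            rw [hAdef]
            simp only
            rw [norm_mul, norm_mul, RCLike.norm_conj]
            exact mul_le_mul_of_nonneg_left (hBs jk hjk.2 T hT) (by positivity)
        _ ≤ Ctot := by
            rw [hCtotdef]
            apply Finset.sum_le_sum_of_subset_of_nonneg (Finset.filter_subset _ _)
            intro jk _ _
            have := hB0 jk
            positivity
    have hre : (∫ t in (1:ℝ)..T, ‖f t‖^2 / t) =
        S * Real.log T + (∑ jk ∈ Finset.univ.filter (fun jk : J × J => jk.1 ≠ jk.2), A jk).re := by
      have := congrArg Complex.re (hG.trans hsum)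
      rwa [Complex.ofReal_re, Complex.add_re, Complex.ofReal_re] at this
    have habs : -(Ctot) ≤ (∑ jk ∈ Finset.univ.filter (fun jk : J × J => jk.1 ≠ jk.2), A jk).re := by
      have h1 := Complex.abs_re_le_norm (∑ jk ∈ Finset.univ.filter (fun jk : J × J => jk.1 ≠ jk.2), A jk)
      have := abs_le.mp (le_trans h1 hErr)
      linarith [this.1]
    linarith [hre, habs]
  -- conclude by contradiction
  by_contra htop
  set L : ENNReal := ∫⁻ t in V, ENNReal.ofReal (1 / t) with hLdef
  have hLne : L ≠ ⊤ := htop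
  set ℓ : ℝ := L.toReal with hℓdef
  have hℓ0 : 0 ≤ ℓ := ENNReal.toReal_nonneg
  set g : ℝ → ℝ := V.indicator (fun t => 1 / t) with hgdef
  have hgmeas : Measurable g := (measurable_const.div measurable_id).indicator hVmeas
  have hgnonneg : ∀ t : ℝ, 0 ≤ g t := by
    intro t
    rw [hgdef]
    by_cases h : t ∈ V
    · rw [Set.indicator_of_mem h]
      have : (1:ℝ) ≤ t := h.1
      positivity
    · rw [Set.indicator_of_notMem h]
  have hgle : ∀ t : ℝ, 1 ≤ t → g t ≤ 1 := by
    intro t ht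
    rw [hgdef]
    by_cases h : t ∈ V
    · rw [Set.indicator_of_mem h]
      rw [div_le_one (by linarith)]
      exact ht
    · rw [Set.indicator_of_notMem h]
      norm_num
  have hgint : ∀ T : ℝ, 1 ≤ T → IntervalIntegrable g volume 1 T := by
    intro T hT
    rw [intervalIntegrable_iff_integrableOn_Ioc_of_le hT]
    apply Measure.integrableOn_of_bounded (M := 1) measure_Ioc_lt_top.ne
      hgmeas.aestronglyMeasurable
    apply (ae_restrict_iff' measurableSet_Ioc).mpr
    apply Filter.Eventually.of_forall
    intro x hx
    rw [Real.norm_eq_abs, abs_of_nonneg (hgnonneg x)]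
    exact hgle x hx.1.le
  have hgbound : ∀ T : ℝ, 1 ≤ T → ∫ t in (1:ℝ)..T, g t ≤ ℓ := by
    intro T hT
    rw [intervalIntegral.integral_of_le hT]
    have heq : ∫ t in Set.Ioc (1:ℝ) T, g t =
        (∫⁻ t in Set.Ioc (1:ℝ) T, ENNReal.ofReal (g t)).toReal := by
      apply integral_eq_lintegral_of_nonneg_ae
      · exact Filter.Eventually.of_forall hgnonneg
      · exact hgmeas.aestronglyMeasurable
    rw [heq]
    apply ENNReal.toReal_mono hLne
    have h3 : (fun t : ℝ => ENNReal.ofReal (g t)) =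
        V.indicator (fun t => ENNReal.ofReal (1 / t)) := by
      funext t
      rw [hgdef]
      by_cases h : t ∈ V
      · rw [Set.indicator_of_mem h, Set.indicator_of_mem h]
      · rw [Set.indicator_of_notMem h, Set.indicator_of_notMem h, ENNReal.ofReal_zero]
    rw [h3, lintegral_indicator hVmeas, Measure.restrict_restrict hVmeas, hLdef]
    exact lintegral_mono_set Set.inter_subset_left
  have hupper : ∀ T : ℝ, 1 ≤ T →
      (∫ t in (1:ℝ)..T, ‖f t‖^2 / t) ≤ ε^2 * Real.log T + M^2 * ℓ := by
    intro T hT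
    have h0T : (0:ℝ) ∉ Set.uIcc 1 T := by
      rw [Set.uIcc_of_le hT]
      intro hh
      linarith [hh.1]
    have hint1 : IntervalIntegrable (fun t : ℝ => ‖f t‖^2 / t) volume 1 T := by
      apply ContinuousOn.intervalIntegrable
      apply ContinuousOn.div ((hfc.norm.pow 2).continuousOn) continuousOn_id
      intro x hx
      simp only [id_eq]
      rw [Set.uIcc_of_le hT] at hx
      exact ne_of_gt (by linarith [hx.1])
    have hint2a : IntervalIntegrable (fun t : ℝ => ε^2 * (1/t)) volume 1 T := by
      apply ContinuousOn.intervalIntegrable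
      apply ContinuousOn.mul continuousOn_const
      apply ContinuousOn.div continuousOn_const continuousOn_id
      intro x hx
      simp only [id_eq]
      rw [Set.uIcc_of_le hT] at hx
      exact ne_of_gt (by linarith [hx.1])
    have hint2b : IntervalIntegrable (fun t : ℝ => M^2 * g t) volume 1 T :=
      (hgint T hT).const_mul _
    have hint2 : IntervalIntegrable (fun t : ℝ => ε^2 * (1/t) + M^2 * g t) volume 1 T :=
      hint2a.add hint2b
    have hptw : ∀ t ∈ Set.Icc (1:ℝ) T, ‖f t‖^2 / t ≤ ε^2 * (1/t) + M^2 * g t := by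
      intro t ht
      have ht1 : (1:ℝ) ≤ t := ht.1
      have htpos : (0:ℝ) < t := by linarith
      by_cases h : t ∈ V
      · have hgt : g t = 1/t := by rw [hgdef, Set.indicator_of_mem h]
        rw [hgt]
        have hfb : ‖f t‖^2 ≤ M^2 := by
          have := hfM t
          nlinarith [norm_nonneg (f t)]
        calc ‖f t‖^2 / t ≤ M^2 / t := by gcongr
          _ = M^2 * (1/t) := by ring
          _ ≤ ε^2 * (1/t) + M^2 * (1/t) := le_add_of_nonneg_left (by positivity)
      · have hgt : g t = 0 := by rw [hgdef, Set.indicator_of_notMem h]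
        rw [hgt, mul_zero, add_zero]
        have hna : ¬ ε ≤ ‖f t‖ := fun hh => h ⟨ht1, hh⟩
        have hlt : ‖f t‖ ≤ ε := by
          exact (not_le.mp hna).le
        have hfb : ‖f t‖^2 ≤ ε^2 := by nlinarith [norm_nonneg (f t)]
        calc ‖f t‖^2 / t ≤ ε^2 / t := by gcongr
          _ = ε^2 * (1/t) := by ring
    calc (∫ t in (1:ℝ)..T, ‖f t‖^2 / t)
        ≤ ∫ t in (1:ℝ)..T, (ε^2 * (1/t) + M^2 * g t) :=
          intervalIntegral.integral_mono_on hT hint1 hint2 hptw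
      _ = ε^2 * (∫ t in (1:ℝ)..T, 1/t) + M^2 * ∫ t in (1:ℝ)..T, g t := by
          rw [intervalIntegral.integral_add hint2a hint2b,
            intervalIntegral.integral_const_mul, intervalIntegral.integral_const_mul]
      _ = ε^2 * Real.log T + M^2 * ∫ t in (1:ℝ)..T, g t := by
          rw [integral_one_div h0T, div_one]
      _ ≤ ε^2 * Real.log T + M^2 * ℓ := by
          have hgb := hgbound T hT
          have : M^2 * (∫ t in (1:ℝ)..T, g t) ≤ M^2 * ℓ :=
            mul_le_mul_of_nonneg_left hgb (by positivity)
          linarith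
  -- choose T large for contradiction
  set X : ℝ := (Ctot + M^2 * ℓ + 1) * (2 / S) with hXdef
  have hX0 : 0 ≤ X := by positivity
  set T : ℝ := Real.exp X with hTdef
  have hT1 : 1 ≤ T := Real.one_le_exp hX0
  have h1 := hlower T hT1
  have h2 := hupper T hT1
  have hlog : Real.log T = X := Real.log_exp X
  rw [hlog] at h1 h2
  rw [hε2] at h2
  have hkey : (S/2) * X = Ctot + M^2 * ℓ + 1 := by
    rw [hXdef]
    field_simp
  nlinarith [h1, h2, hkey]
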